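/- Let Z : [0,T] → ℝ be ζ-Hölder continuous with Z(0) = 0 and Hölder constant c, for some ζ ∈ (0,1). For θ ≥ 0 define Y_t(θ) = e^{-θt} Z(t) + θ ∫_0^t e^{-θ(t-s)} (Z(t) - Z(s)) ds. Then for all t ∈ [0,T] and θ ≥ 0, |Y_t(θ)| ≤ c ζ ∫_0^t e^{-θu} u^{ζ-1} du, and in particular sup_{t ≤ T} |Y_t(θ)| ≤ c ζ ∫_0^T e^{-θu} u^{ζ-1} du. -/

import Mathlib

/-!
The boundary term is bounded through the Hölder estimate at `(0, t)` by `c e^{-θt} t^ζ`, and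
the integral term by `c θ ∫_0^t e^{-θu} u^ζ du`. Integrating
`(e^{-θu} u^ζ)' = ζ e^{-θu} u^{ζ-1} - θ e^{-θu} u^ζ` over `[0, t]` (the boundary value at `0`
vanishes since `ζ > 0`) shows that the sum of these two bounds is exactly
`c ζ ∫_0^t e^{-θu} u^{ζ-1} du`.
-/

open MeasureTheory intervalIntegral Set

lemma intervalIntegrable_exp_mul_rpow (θ r a b : ℝ) (hr : -1 < r) :
    IntervalIntegrable (fun u => Real.exp (-(θ * u)) * u ^ r) volume a b :=
  (intervalIntegral.intervalIntegrable_rpow' hr).continuousOn_mul (by fun_prop)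

lemma integral_exp_mul_rpow_mono_right (θ : ℝ) {r t T : ℝ} (hr : -1 < r) (ht : 0 ≤ t)
    (htT : t ≤ T) :
    ∫ u in (0 : ℝ)..t, Real.exp (-(θ * u)) * u ^ r
      ≤ ∫ u in (0 : ℝ)..T, Real.exp (-(θ * u)) * u ^ r := by
  refine integral_mono_interval le_rfl ht htT ?_ (intervalIntegrable_exp_mul_rpow θ r 0 T hr)
  filter_upwards [ae_restrict_mem measurableSet_Ioc] with u hu
  exact mul_nonneg (Real.exp_pos _).le (Real.rpow_nonneg hu.1.le _)

lemma hasDerivAt_exp_mul_rpow (θ ζ : ℝ) {x : ℝ} (hx : 0 < x) :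
    HasDerivAt (fun u => Real.exp (-(θ * u)) * u ^ ζ)
      (ζ * (Real.exp (-(θ * x)) * x ^ (ζ - 1)) - θ * (Real.exp (-(θ * x)) * x ^ ζ)) x := by
  have hexp : HasDerivAt (fun u => Real.exp (-(θ * u))) (Real.exp (-(θ * x)) * -θ) x := by
    simpa using ((hasDerivAt_id x).const_mul θ).neg.exp
  exact (hexp.mul (Real.hasDerivAt_rpow_const (p := ζ) (Or.inl hx.ne'))).congr_deriv (by ring)

lemma exp_mul_rpow_add_mul_integral_eq (θ : ℝ) {t ζ : ℝ} (ht : 0 ≤ t) (hζ : 0 < ζ) :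
    Real.exp (-(θ * t)) * t ^ ζ + θ * ∫ u in (0 : ℝ)..t, Real.exp (-(θ * u)) * u ^ ζ
      = ζ * ∫ u in (0 : ℝ)..t, Real.exp (-(θ * u)) * u ^ (ζ - 1) := by
  have hint₁ := intervalIntegrable_exp_mul_rpow θ (ζ - 1) 0 t (by linarith)
  have hint := intervalIntegrable_exp_mul_rpow θ ζ 0 t (by linarith)
  have hcont : ContinuousOn (fun u => Real.exp (-(θ * u)) * u ^ ζ) (Icc 0 t) :=
    ((by fun_prop : Continuous fun u : ℝ => Real.exp (-(θ * u))).mul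
      (Real.continuous_rpow_const hζ.le)).continuousOn
  have hftc := integral_eq_sub_of_hasDeriv_right_of_le ht hcont
    (fun x hx => (hasDerivAt_exp_mul_rpow θ ζ hx.1).hasDerivWithinAt)
    ((hint₁.const_mul ζ).sub (hint.const_mul θ))
  rw [integral_sub (hint₁.const_mul ζ) (hint.const_mul θ),
    intervalIntegral.integral_const_mul, intervalIntegral.integral_const_mul] at hftc
  simp only [mul_zero, Real.zero_rpow hζ.ne', sub_zero] at hftc
  linarith

lemma abs_integral_exp_mul_sub_le {Z : ℝ → ℝ} {t c ζ : ℝ} (θ : ℝ) (ht : 0 ≤ t)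
    (hζ : 0 ≤ ζ) (hZ : ∀ s ∈ Icc 0 t, |Z t - Z s| ≤ c * (t - s) ^ ζ) :
    |∫ s in (0 : ℝ)..t, Real.exp (-(θ * (t - s))) * (Z t - Z s)|
      ≤ c * ∫ u in (0 : ℝ)..t, Real.exp (-(θ * u)) * u ^ ζ := by
  have hsubst := integral_comp_sub_left (a := 0) (b := t)
    (fun u => c * (Real.exp (-(θ * u)) * u ^ ζ)) t
  simp only [sub_self, sub_zero] at hsubst
  rw [← intervalIntegral.integral_const_mul, ← hsubst, ← Real.norm_eq_abs]
  refine norm_integral_le_of_norm_le ht (Filter.Eventually.of_forall fun s hs => ?_) ?_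
  · rw [Real.norm_eq_abs, abs_mul, Real.abs_exp, mul_left_comm]
    exact mul_le_mul_of_nonneg_left (hZ s (Ioc_subset_Icc_self hs)) (Real.exp_pos _).le
  · have hexp : Continuous fun s : ℝ => Real.exp (-(θ * (t - s))) := by fun_prop
    exact (continuous_const.mul (hexp.mul ((Real.continuous_rpow_const hζ).comp
      (continuous_sub_left t)))).intervalIntegrable 0 t

lemma abs_exp_mul_add_integral_le {Z : ℝ → ℝ} {t c ζ θ : ℝ} (ht : 0 ≤ t) (hζ : 0 < ζ)
    (hθ : 0 ≤ θ) (hZ0 : Z 0 = 0) (hZ : ∀ s ∈ Icc 0 t, |Z t - Z s| ≤ c * (t - s) ^ ζ) :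
    |Real.exp (-(θ * t)) * Z t
        + θ * ∫ s in (0 : ℝ)..t, Real.exp (-(θ * (t - s))) * (Z t - Z s)|
      ≤ c * ζ * ∫ u in (0 : ℝ)..t, Real.exp (-(θ * u)) * u ^ (ζ - 1) := by
  have hboundary : |Real.exp (-(θ * t)) * Z t| ≤ c * (Real.exp (-(θ * t)) * t ^ ζ) := by
    have h := hZ 0 ⟨le_rfl, ht⟩
    rw [hZ0, sub_zero, sub_zero] at h
    rw [abs_mul, Real.abs_exp, mul_left_comm]
    exact mul_le_mul_of_nonneg_left h (Real.exp_pos _).le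
  have hintegral := mul_le_mul_of_nonneg_left (abs_integral_exp_mul_sub_le θ ht hζ.le hZ) hθ
  calc _ ≤ _ := abs_add_le _ _
    _ ≤ c * (Real.exp (-(θ * t)) * t ^ ζ)
          + θ * (c * ∫ u in (0 : ℝ)..t, Real.exp (-(θ * u)) * u ^ ζ) := by
      rw [abs_mul θ, abs_of_nonneg hθ]
      exact add_le_add hboundary hintegral
    _ = _ := by rw [mul_assoc, ← exp_mul_rpow_add_mul_integral_eq θ ht hζ]; ring

theorem stmt_7_general (T c ζ : ℝ) (hζ : ζ ∈ Set.Ioo (0 : ℝ) 1)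
    (Z : ℝ → ℝ) (hZ0 : Z 0 = 0)
    (hhold : ∀ s ∈ Set.Icc (0 : ℝ) T, ∀ t ∈ Set.Icc (0 : ℝ) T,
      |Z t - Z s| ≤ c * |t - s| ^ ζ) :
    ∀ t ∈ Set.Icc (0 : ℝ) T, ∀ θ : ℝ, 0 ≤ θ →
      (|Real.exp (-(θ * t)) * Z t
          + θ * ∫ s in (0 : ℝ)..t, Real.exp (-(θ * (t - s))) * (Z t - Z s)|
        ≤ c * ζ * ∫ u in (0 : ℝ)..t, Real.exp (-(θ * u)) * u ^ (ζ - 1)) ∧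
      (|Real.exp (-(θ * t)) * Z t
          + θ * ∫ s in (0 : ℝ)..t, Real.exp (-(θ * (t - s))) * (Z t - Z s)|
        ≤ c * ζ * ∫ u in (0 : ℝ)..T, Real.exp (-(θ * u)) * u ^ (ζ - 1)) := by
  intro t ht θ hθ
  have hbound := abs_exp_mul_add_integral_le ht.1 hζ.1 hθ hZ0 fun s hs => by
    simpa [abs_of_nonneg (sub_nonneg.2 hs.2)] using hhold s ⟨hs.1, hs.2.trans ht.2⟩ t ht
  refine ⟨hbound, hbound.trans ?_⟩
  rcases ht.2.eq_or_lt with rfl | htT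
  · rfl
  have hT : 0 < T := ht.1.trans_lt htT
  have hc : 0 ≤ c := by
    have h := hhold 0 ⟨le_rfl, hT.le⟩ T ⟨hT.le, le_rfl⟩
    rw [hZ0, sub_zero, sub_zero] at h
    exact nonneg_of_mul_nonneg_left ((abs_nonneg _).trans h)
      (Real.rpow_pos_of_pos (abs_pos.2 hT.ne') ζ)
  exact mul_le_mul_of_nonneg_left
    (integral_exp_mul_rpow_mono_right θ (by linarith [hζ.1]) ht.1 htT.le) (mul_nonneg hc hζ.1.le)

/-- Pathwise estimate for the Markovian lift of a Hölder-continuous driver: if `Z` is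
`ζ`-Hölder on `[0,T]` with constant `c` and `Z 0 = 0`, then
`Y_t(θ) = e^{-θt}Z(t) + θ∫_0^t e^{-θ(t-s)}(Z(t)-Z(s)) ds` satisfies
`|Y_t(θ)| ≤ cζ ∫_0^t e^{-θu} u^{ζ-1} du ≤ cζ ∫_0^T e^{-θu} u^{ζ-1} du`. -/
theorem stmt_7 (T c ζ : ℝ) (hT : 0 ≤ T) (hζ : ζ ∈ Set.Ioo (0 : ℝ) 1)
    (Z : ℝ → ℝ) (hZ0 : Z 0 = 0)
    (hhold : ∀ s ∈ Set.Icc (0 : ℝ) T, ∀ t ∈ Set.Icc (0 : ℝ) T,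
      |Z t - Z s| ≤ c * |t - s| ^ ζ) :
    ∀ t ∈ Set.Icc (0 : ℝ) T, ∀ θ : ℝ, 0 ≤ θ →
      (|Real.exp (-(θ * t)) * Z t
          + θ * ∫ s in (0 : ℝ)..t, Real.exp (-(θ * (t - s))) * (Z t - Z s)|
        ≤ c * ζ * ∫ u in (0 : ℝ)..t, Real.exp (-(θ * u)) * u ^ (ζ - 1)) ∧
      (|Real.exp (-(θ * t)) * Z t
          + θ * ∫ s in (0 : ℝ)..t, Real.exp (-(θ * (t - s))) * (Z t - Z s)|
        ≤ c * ζ * ∫ u in (0 : ℝ)..T, Real.exp (-(θ * u)) * u ^ (ζ - 1)) :=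
  stmt_7_general T c ζ hζ Z hZ0 hhold
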